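/- For any invertible 3×3 matrix M and vector t ∈ ℝ³, the identity [M⁻¹ t]ₓ = det(M⁻¹) · Mᵀ [t]ₓ M holds. -/

import Mathlib

open Matrix

/-- The skew-symmetric matrix `[t]ₓ` of a 3-vector. -/
def skew {R : Type*} [CommRing R] (t : Fin 3 → R) : Matrix (Fin 3) (Fin 3) R :=
  !![0, -t 2, t 1; t 2, 0, -t 0; -t 1, t 0, 0]

/- Since `inv_def` makes `M⁻¹ = det(M)⁻¹ʳ • adj M` and `det_nonsing_inv` makes
`det(M⁻¹) = det(M)⁻¹ʳ` for every `M`, the theorem is the scalar multiple of the polynomial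
identity `Mᵀ [t]ₓ M = [adj(M) t]ₓ` (the cofactor rule `(Ma) × (Mb) = adj(M)ᵀ (a × b)`)
by `det(M)⁻¹ʳ`; for singular `M` both sides are `0`. -/

lemma skew_smul {R : Type*} [CommRing R] (c : R) (t : Fin 3 → R) :
    skew (c • t) = c • skew t := by
  ext i j
  fin_cases i <;> fin_cases j <;> simp [skew]

lemma transpose_mul_skew_mul {R : Type*} [CommRing R] (M : Matrix (Fin 3) (Fin 3) R)
    (t : Fin 3 → R) : Mᵀ * skew t * M = skew (M.adjugate *ᵥ t) := by
  ext i j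
  fin_cases i <;> fin_cases j <;>
    simp [skew, adjugate_fin_three, mul_apply, mulVec, dotProduct, Fin.sum_univ_three] <;>
    ring

theorem stmt_16_general (M : Matrix (Fin 3) (Fin 3) ℝ) (t : Fin 3 → ℝ) :
    skew (M⁻¹.mulVec t) = (M⁻¹).det • (Mᵀ * skew t * M) := by
  rw [transpose_mul_skew_mul, det_nonsing_inv, inv_def, smul_mulVec, skew_smul]

theorem stmt_16 (M : Matrix (Fin 3) (Fin 3) ℝ) (hM : IsUnit M.det) (t : Fin 3 → ℝ) :
    skew (M⁻¹.mulVec t) = (M⁻¹).det • (Mᵀ * skew t * M) :=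
  stmt_16_general M t
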